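/- arXiv:1807.02595 — 2 statements merged into one kernel-verified Lean document; each statement's English description precedes it below -/
import Mathlib

section
/- Let L be a transfer operator given by transition probabilities on a compact metric space X and μ a stationary probability measure (L*μ = μ). Let φ be bounded measurable real-valued, φ_n := Σ_{j=0}^{n-1} L^j φ, and for a real number α let C_α := {x : sup_{n≥1} φ_n(x)/n > α}. Then for any measurable set A ⊆ C_α satisfying (Lχ_A)(x) = χ_A(x) for μ-a.e. x, one has ∫_A φ dμ ≥ α · μ(A). -/
/-
Put `ψ := 𝟙_A (φ - α)`. Since `A` is invariant, `L (𝟙_A f) = 𝟙_A (L f)` almost everywhere, so the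
partial sums `S_n ψ = ∑_{j<n} L^j ψ` agree a.e. with `𝟙_A (φ_n - n α)`; by the choice of `A` the set
where some `S_n ψ` is positive is therefore `A` up to a null set. Hopf's maximal ergodic inequality
for the positive, `μ`-preserving operator `L` says that `ψ` has nonnegative integral over that set,
i.e. `∫_A (φ - α) dμ ≥ 0`.
-/

open MeasureTheory Filter

/-- The transfer operator on bounded measurable functions associated to a
family of transition probabilities `P : X → Measure X`. -/
noncomputable def Lop {X : Type*} [MeasurableSpace X]
    (P : X → Measure X) (φ : X → ℝ) : X → ℝ :=
  fun x => ∫ y, φ y ∂(P x)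

open ProbabilityTheory Finset

structure BoundedMeasurable {X : Type*} [MeasurableSpace X] (f : X → ℝ) : Prop where
  measurable : Measurable f
  bounded : ∃ C, ∀ x, |f x| ≤ C

namespace BoundedMeasurable

variable {X : Type*} [MeasurableSpace X] {f g : X → ℝ}

theorem integrable (hf : BoundedMeasurable f) (ν : Measure X) [IsFiniteMeasure ν] :
    Integrable f ν := by
  obtain ⟨C, hC⟩ := hf.bounded
  exact (integrable_const C).mono' hf.measurable.aestronglyMeasurable
    (Eventually.of_forall fun x => by simpa using hC x)

theorem const (c : ℝ) : BoundedMeasurable fun _ : X => c :=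
  ⟨measurable_const, |c|, fun _ => le_rfl⟩

theorem add (hf : BoundedMeasurable f) (hg : BoundedMeasurable g) : BoundedMeasurable (f + g) := by
  obtain ⟨C, hC⟩ := hf.bounded
  obtain ⟨D, hD⟩ := hg.bounded
  exact ⟨hf.measurable.add hg.measurable, C + D,
    fun x => (abs_add_le _ _).trans (add_le_add (hC x) (hD x))⟩

theorem sub (hf : BoundedMeasurable f) (hg : BoundedMeasurable g) : BoundedMeasurable (f - g) := by
  obtain ⟨C, hC⟩ := hf.bounded
  obtain ⟨D, hD⟩ := hg.bounded
  exact ⟨hf.measurable.sub hg.measurable, C + D,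
    fun x => (abs_sub _ _).trans (add_le_add (hC x) (hD x))⟩

theorem sup (hf : BoundedMeasurable f) (hg : BoundedMeasurable g) : BoundedMeasurable (f ⊔ g) := by
  obtain ⟨C, hC⟩ := hf.bounded
  obtain ⟨D, hD⟩ := hg.bounded
  exact ⟨hf.measurable.sup hg.measurable, max C D,
    fun x => (abs_max_le_max_abs_abs).trans (max_le_max (hC x) (hD x))⟩

theorem indicator (hf : BoundedMeasurable f) {A : Set X} (hA : MeasurableSet A) :
    BoundedMeasurable (A.indicator f) := by
  obtain ⟨C, hC⟩ := hf.bounded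
  refine ⟨hf.measurable.indicator hA, C, fun x => ?_⟩
  by_cases hx : x ∈ A
  · simpa [hx] using hC x
  · simpa [hx] using (abs_nonneg _).trans (hC x)

end BoundedMeasurable

/-- `lopSum P φ n` is the paper's `φ_n = ∑_{j<n} L^j φ`. -/
noncomputable def lopSum {X : Type*} [MeasurableSpace X] (P : X → Measure X) (f : X → ℝ)
    (n : ℕ) : X → ℝ :=
  ∑ j ∈ range n, (Lop P)^[j] f

noncomputable def maxLopSum {X : Type*} [MeasurableSpace X] (P : X → Measure X) (f : X → ℝ)
    (N : ℕ) : X → ℝ :=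
  (range (N + 1)).sup' nonempty_range_add_one (lopSum P f)

section PartialSums

variable {X : Type*} [MeasurableSpace X] (P : X → Measure X) (f : X → ℝ)

theorem lopSum_zero : lopSum P f 0 = 0 := by
  simp [lopSum]

theorem lopSum_add_one (n : ℕ) : lopSum P f (n + 1) = lopSum P f n + (Lop P)^[n] f :=
  sum_range_succ _ _

theorem lopSum_le_maxLopSum {n N : ℕ} (h : n ≤ N) : lopSum P f n ≤ maxLopSum P f N :=
  le_sup' (lopSum P f) (mem_range.2 (Nat.lt_succ_of_le h))

theorem maxLopSum_nonneg (N : ℕ) : 0 ≤ maxLopSum P f N :=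
  lopSum_zero P f ▸ lopSum_le_maxLopSum P f (Nat.zero_le N)

theorem maxLopSum_mono : Monotone (maxLopSum P f) :=
  fun _ _ h => sup'_mono _ (range_subset_range.2 (Nat.succ_le_succ h)) _

theorem exists_maxLopSum_eq (N : ℕ) (x : X) :
    ∃ n ≤ N, maxLopSum P f N x = lopSum P f n x := by
  obtain ⟨n, hn, heq⟩ := exists_mem_eq_sup' (nonempty_range_add_one (n := N)) (lopSum P f · x)
  exact ⟨n, Nat.lt_succ_iff.1 (mem_range.1 hn), (Finset.sup'_apply _ _ x).trans heq⟩

end PartialSums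

section Markov

variable {X : Type*} [MeasurableSpace X] (κ : Kernel X X) {f g : X → ℝ}

theorem lop_nonneg (h : 0 ≤ f) : 0 ≤ Lop κ f :=
  fun _ => integral_nonneg h

variable [IsMarkovKernel κ]

theorem BoundedMeasurable.lop (hf : BoundedMeasurable f) : BoundedMeasurable (Lop κ f) := by
  obtain ⟨C, hC⟩ := hf.bounded
  refine ⟨(hf.measurable.comp measurable_snd).stronglyMeasurable.integral_kernel_prod_right'
    (κ := κ) |>.measurable, C, fun x => ?_⟩
  simpa [Lop] using norm_integral_le_of_norm_le_const (μ := κ x) (f := f)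
    (Eventually.of_forall fun y => (Real.norm_eq_abs (f y)).trans_le (hC y))

theorem BoundedMeasurable.lop_iterate (hf : BoundedMeasurable f) (n : ℕ) :
    BoundedMeasurable ((Lop κ)^[n] f) := by
  induction n with
  | zero => exact hf
  | succ n ih => rw [Function.iterate_succ_apply']; exact ih.lop κ

theorem BoundedMeasurable.lopSum (hf : BoundedMeasurable f) (n : ℕ) :
    BoundedMeasurable (lopSum κ f n) := by
  induction n with
  | zero => rw [lopSum_zero]; exact BoundedMeasurable.const 0
  | succ n ih => rw [lopSum_add_one]; exact ih.add (hf.lop_iterate κ n)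

theorem BoundedMeasurable.maxLopSum (hf : BoundedMeasurable f) (N : ℕ) :
    BoundedMeasurable (maxLopSum κ f N) :=
  sup'_induction _ _ (fun _ h₁ _ h₂ => h₁.sup h₂) fun n _ => hf.lopSum κ n

theorem lop_add (hf : BoundedMeasurable f) (hg : BoundedMeasurable g) :
    Lop κ (f + g) = Lop κ f + Lop κ g :=
  funext fun x => integral_add (hf.integrable (κ x)) (hg.integrable (κ x))

theorem lop_sub_const (hf : BoundedMeasurable f) (c : ℝ) :
    Lop κ (f - fun _ => c) = Lop κ f - fun _ => c :=
  funext fun x => by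
    simp [Lop, integral_sub (hf.integrable (κ x)) (integrable_const c)]

theorem lop_iterate_sub_const (hf : BoundedMeasurable f) (c : ℝ) (n : ℕ) :
    (Lop κ)^[n] (f - fun _ => c) = (Lop κ)^[n] f - fun _ => c := by
  induction n with
  | zero => rfl
  | succ n ih =>
    simp only [Function.iterate_succ_apply', ih, lop_sub_const κ (hf.lop_iterate κ n)]

theorem lopSum_sub_const (hf : BoundedMeasurable f) (c : ℝ) (n : ℕ) :
    lopSum κ (f - fun _ => c) n = lopSum κ f n - fun _ => n * c := by
  ext x
  simp [lopSum, lop_iterate_sub_const κ hf, sum_sub_distrib]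

theorem lop_mono (hf : BoundedMeasurable f) (hg : BoundedMeasurable g) (h : f ≤ g) :
    Lop κ f ≤ Lop κ g :=
  fun x => integral_mono (hf.integrable (κ x)) (hg.integrable (κ x)) h

theorem lopSum_add_one_eq_add_lop (hf : BoundedMeasurable f) (n : ℕ) :
    lopSum κ f (n + 1) = f + Lop κ (lopSum κ f n) := by
  induction n with
  | zero =>
    ext x
    simp [lopSum, Lop]
  | succ n ih =>
    conv_lhs => rw [lopSum_add_one, ih]
    rw [lopSum_add_one κ f n, lop_add κ (hf.lopSum κ n) (hf.lop_iterate κ n),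
      Function.iterate_succ_apply', add_assoc]

end Markov

section Stationary

variable {X : Type*} [MeasurableSpace X] (κ : Kernel X X) {μ : Measure X}
  (hstat : μ.bind κ = μ)
include hstat

theorem integral_lop [IsMarkovKernel κ] [IsFiniteMeasure μ] {f : X → ℝ}
    (hf : BoundedMeasurable f) : ∫ x, Lop κ f x ∂μ = ∫ x, f x ∂μ := by
  have hint : Integrable f (κ ∘ₘ μ) := by rw [hstat]; exact hf.integrable μ
  rw [Measure.comp_eq_comp_const_apply] at hint
  conv_rhs => rw [← hstat, Measure.comp_eq_comp_const_apply, Kernel.integral_comp hint]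
  simp [Lop]

theorem lop_congr_ae {f g : X → ℝ} (h : f =ᵐ[μ] g) : Lop κ f =ᵐ[μ] Lop κ g := by
  rw [← hstat] at h
  filter_upwards [Measure.ae_ae_of_ae_comp h] with x hx
  exact integral_congr_ae hx

end Stationary

section InvariantSet

variable {X : Type*} [MeasurableSpace X] (κ : Kernel X X) [IsMarkovKernel κ] {μ : Measure X}
  {A : Set X} (hA : MeasurableSet A)
  (hinv : Lop κ (A.indicator fun _ => (1 : ℝ)) =ᵐ[μ] A.indicator fun _ => (1 : ℝ))
include hA hinv

/-- `L 𝟙_A = 𝟙_A` says that a.e. `κ x` is concentrated on `A` for `x ∈ A` and on `Aᶜ` for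
`x ∉ A`. -/
theorem lop_indicator_ae (f : X → ℝ) : Lop κ (A.indicator f) =ᵐ[μ] A.indicator (Lop κ f) := by
  filter_upwards [hinv] with x hx
  have hκA : (κ x).real A = A.indicator 1 x := by
    rw [← integral_indicator_one hA]; exact hx
  simp only [Lop, integral_indicator hA]
  by_cases hxA : x ∈ A
  · have hA1 : κ x A = 1 := by
      simpa [hxA, measureReal_def, ENNReal.toReal_eq_one_iff] using hκA
    rw [Set.indicator_of_mem hxA,
      Measure.restrict_eq_self_of_ae_mem (mem_ae_iff.2 ((prob_compl_eq_zero_iff hA).2 hA1))]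
    rfl
  · have hA0 : κ x A = 0 := by
      simpa [hxA, measureReal_eq_zero_iff] using hκA
    rw [Set.indicator_of_notMem hxA, Measure.restrict_eq_zero.2 hA0, integral_zero_measure]

variable (hstat : μ.bind κ = μ)
include hstat

theorem lop_iterate_indicator_ae (f : X → ℝ) (n : ℕ) :
    (Lop κ)^[n] (A.indicator f) =ᵐ[μ] A.indicator ((Lop κ)^[n] f) := by
  induction n with
  | zero => rfl
  | succ n ih =>
    simp only [Function.iterate_succ_apply']
    exact (lop_congr_ae κ hstat ih).trans (lop_indicator_ae κ hA hinv _)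

theorem lopSum_indicator_ae (f : X → ℝ) (n : ℕ) :
    lopSum κ (A.indicator f) n =ᵐ[μ] A.indicator (lopSum κ f n) := by
  induction n with
  | zero => simp [lopSum_zero]
  | succ n ih =>
    rw [lopSum_add_one, lopSum_add_one, Set.indicator_add']
    exact ih.add (lop_iterate_indicator_ae κ hA hinv hstat f n)

theorem setOf_exists_lopSum_indicator_pos_ae_eq {f : X → ℝ} (hf : BoundedMeasurable f) {c : ℝ}
    (hAsub : A ⊆ {x | ∃ n : ℕ, c < (∑ j ∈ range (n + 1), (Lop κ)^[j] f x) / (n + 1 : ℝ)}) :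
    {x | ∃ n, 0 < lopSum κ (A.indicator (f - fun _ => c)) n x} =ᵐ[μ] A := by
  have hsum : ∀ᵐ x ∂μ, ∀ n : ℕ, lopSum κ (A.indicator (f - fun _ => c)) n x
      = A.indicator (lopSum κ f n - fun _ => n * c) x := by
    refine ae_all_iff.2 fun n => ?_
    rw [← lopSum_sub_const κ hf]
    exact lopSum_indicator_ae κ hA hinv hstat _ n
  refine eventuallyEq_set.2 ?_
  filter_upwards [hsum] with x hx
  simp only [hx]
  constructor
  · rintro ⟨n, hn⟩
    by_contra hxA
    simp [hxA] at hn
  · intro hxA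
    obtain ⟨n, hn⟩ := hAsub hxA
    rw [lt_div_iff₀ (by positivity)] at hn
    refine ⟨n + 1, ?_⟩
    simp only [Set.indicator_of_mem hxA, Pi.sub_apply, lopSum, Finset.sum_apply]
    push_cast
    linarith

end InvariantSet

section Hopf

variable {X : Type*} [MeasurableSpace X] (κ : Kernel X X) [IsMarkovKernel κ] {f : X → ℝ}

/-- Where the running maximum is positive it is attained by some `S_{m+1} f = f + L (S_m f)`. -/
theorem maxLopSum_le_add_lop (hf : BoundedMeasurable f) {N : ℕ} {x : X}
    (hx : 0 < maxLopSum κ f N x) : maxLopSum κ f N x ≤ f x + Lop κ (maxLopSum κ f N) x := by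
  obtain ⟨n, hnN, heq⟩ := exists_maxLopSum_eq κ f N x
  cases n with
  | zero => simp [heq, lopSum_zero] at hx
  | succ m =>
    rw [heq, lopSum_add_one_eq_add_lop κ hf]
    exact add_le_add le_rfl (lop_mono κ (hf.lopSum κ m) (hf.maxLopSum κ N)
      (lopSum_le_maxLopSum κ f (by omega)) x)

variable {μ : Measure X} [IsFiniteMeasure μ] (hstat : μ.bind κ = μ)
include hstat

theorem setIntegral_maxLopSum_pos_nonneg (hf : BoundedMeasurable f) (N : ℕ) :
    0 ≤ ∫ x in {x | 0 < maxLopSum κ f N x}, f x ∂μ := by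
  set M := maxLopSum κ f N
  set E := {x | 0 < M x}
  have hM := hf.maxLopSum κ N
  have hE : MeasurableSet E := measurableSet_lt measurable_const hM.measurable
  calc (0 : ℝ) = ∫ x, M x ∂μ - ∫ x, Lop κ M x ∂μ := by rw [integral_lop κ hstat hM, sub_self]
    _ = ∫ x in E, M x ∂μ - ∫ x, Lop κ M x ∂μ := by
      rw [setIntegral_eq_integral_of_forall_compl_eq_zero (s := E) fun x hx =>
        le_antisymm (not_lt.1 hx) (maxLopSum_nonneg κ f N x)]
    _ ≤ ∫ x in E, M x ∂μ - ∫ x in E, Lop κ M x ∂μ :=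
      sub_le_sub_left (setIntegral_le_integral ((hM.lop κ).integrable μ)
        (Eventually.of_forall (lop_nonneg κ (maxLopSum_nonneg κ f N)))) _
    _ = ∫ x in E, (M x - Lop κ M x) ∂μ :=
      (integral_sub (hM.integrable μ).integrableOn ((hM.lop κ).integrable μ).integrableOn).symm
    _ ≤ ∫ x in E, f x ∂μ :=
      setIntegral_mono_on ((hM.integrable μ).sub ((hM.lop κ).integrable μ)).integrableOn
        (hf.integrable μ).integrableOn hE fun x hx => by
          linarith [maxLopSum_le_add_lop κ hf hx]

theorem hopf_maximal_ergodic (hf : BoundedMeasurable f) :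
    0 ≤ ∫ x in {x | ∃ n, 0 < lopSum κ f n x}, f x ∂μ := by
  have hunion : {x | ∃ n, 0 < lopSum κ f n x} = ⋃ N, {x | 0 < maxLopSum κ f N x} := by
    ext x
    simp only [Set.mem_ofPred_eq, Set.mem_iUnion]
    constructor
    · rintro ⟨n, hn⟩
      exact ⟨n, hn.trans_le (lopSum_le_maxLopSum κ f le_rfl x)⟩
    · rintro ⟨N, hN⟩
      obtain ⟨n, -, heq⟩ := exists_maxLopSum_eq κ f N x
      exact ⟨n, heq ▸ hN⟩
  rw [hunion]
  exact ge_of_tendsto' (tendsto_setIntegral_of_monotone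
    (fun N => measurableSet_lt measurable_const (hf.maxLopSum κ N).measurable)
    (fun _ _ h x hx => lt_of_lt_of_le hx (maxLopSum_mono κ f h x))
    (hf.integrable μ).integrableOn) (setIntegral_maxLopSum_pos_nonneg κ hstat hf)

end Hopf

theorem stmt_6_general {X : Type*} [MeasurableSpace X]
    (P : X → Measure X) (hPprob : ∀ x, IsProbabilityMeasure (P x))
    (hPmeas : Measurable P)
    (μ : Measure X) [IsProbabilityMeasure μ] (hstat : μ.bind P = μ)
    (φ : X → ℝ) (hφm : Measurable φ) (hφb : ∃ C, ∀ x, |φ x| ≤ C)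
    (α : ℝ) (A : Set X) (hAm : MeasurableSet A)
    (hAsub : A ⊆ {x | ∃ n : ℕ,
      α < (∑ j ∈ Finset.range (n + 1), (Lop P)^[j] φ x) / (n + 1 : ℝ)})
    (hAinv : Lop P (A.indicator fun _ => (1 : ℝ)) =ᵐ[μ] A.indicator fun _ => (1 : ℝ)) :
    α * (μ A).toReal ≤ ∫ x in A, φ x ∂μ := by
  let κ : Kernel X X := ⟨P, hPmeas⟩
  have : IsMarkovKernel κ := ⟨hPprob⟩
  have hφ : BoundedMeasurable φ := ⟨hφm, hφb⟩
  have hmax := hopf_maximal_ergodic κ hstat ((hφ.sub (.const α)).indicator hAm)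
  rw [setIntegral_congr_set (setOf_exists_lopSum_indicator_pos_ae_eq κ hAm hAinv hstat hφ hAsub),
    setIntegral_indicator hAm, Set.inter_self] at hmax
  simp only [Pi.sub_apply] at hmax
  rw [integral_sub (hφ.integrable μ).integrableOn (integrable_const α), setIntegral_const,
    measureReal_def, smul_eq_mul] at hmax
  linarith

theorem stmt_6 {X : Type*} [MetricSpace X] [CompactSpace X]
    [MeasurableSpace X] [BorelSpace X]
    (P : X → Measure X) (hPprob : ∀ x, IsProbabilityMeasure (P x))
    (hPmeas : Measurable P)
    (μ : Measure X) [IsProbabilityMeasure μ] (hstat : μ.bind P = μ)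
    (φ : X → ℝ) (hφm : Measurable φ) (hφb : ∃ C, ∀ x, |φ x| ≤ C)
    (α : ℝ) (A : Set X) (hAm : MeasurableSet A)
    (hAsub : A ⊆ {x | ∃ n : ℕ,
      α < (∑ j ∈ Finset.range (n + 1), (Lop P)^[j] φ x) / (n + 1 : ℝ)})
    (hAinv : Lop P (A.indicator fun _ => (1 : ℝ)) =ᵐ[μ] A.indicator fun _ => (1 : ℝ)) :
    α * (μ A).toReal ≤ ∫ x in A, φ x ∂μ :=
  stmt_6_general P hPprob hPmeas μ hstat φ hφm hφb α A hAm hAsub hAinv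
end

section
/- Let L be a transfer operator given by transition probabilities on a compact metric space X and μ a probability measure with L*μ = μ. If φ is a bounded measurable real function with Lφ = φ μ-a.e., then for all real α, β the sets C_α = {x : φ(x) > α} and B_β = {x : φ(x) < β} are μ-a.e. L-invariant, i.e. Lχ_{C_α} = χ_{C_α} and Lχ_{B_β} = χ_{B_β} μ-a.e. -/
open MeasureTheory Filter

open ProbabilityTheory

/-!
For a level `t`, the function `ψ = max φ t` satisfies `ψ ≤ Lψ`; as `μ` is stationary,
`∫ (Lψ - ψ) dμ = 0`, so `ψ` is invariant as well. At a point `x` with `t < φ x` where both are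
invariant, `∫ (ψ - φ) dP x = ψ x - φ x = 0` with `ψ - φ ≥ 0`, so `φ ≥ t` holds `P x`-a.e.
Letting `t` run through the rationals below `φ x`, and doing the same for `-φ`, gives
`φ y = φ x` for `P x`-a.e. `y` and `μ`-a.e. `x`. Hence every function of `φ` is invariant,
in particular the indicators of `{α < φ}` and `{φ < β}`.
-/

section TransferOperator

variable {X : Type*} [MeasurableSpace X] {κ : Kernel X X} {μ : Measure X} {f φ : X → ℝ}

lemma Lop_neg : Lop κ (-f) = -Lop κ f :=
  funext fun _ => integral_neg f

lemma integrable_Lop (hf : Integrable f (κ ∘ₘ μ)) : Integrable (Lop κ f) μ := by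
  rw [Measure.comp_eq_comp_const_apply] at hf
  exact hf.integral_comp

lemma integral_Lop [SFinite μ] [IsSFiniteKernel κ] (hf : Integrable f (κ ∘ₘ μ)) :
    ∫ x, Lop κ f x ∂μ = ∫ y, f y ∂(κ ∘ₘ μ) := by
  rw [Measure.comp_eq_comp_const_apply] at hf ⊢
  exact (Kernel.integral_comp hf).symm

lemma Lop_ae_eq_of_ae_le [SFinite μ] [IsSFiniteKernel κ] (hstat : κ ∘ₘ μ = μ)
    (hf : Integrable f μ) (hle : f ≤ᵐ[μ] Lop κ f) : Lop κ f =ᵐ[μ] f := by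
  have hf' : Integrable f (κ ∘ₘ μ) := hstat.symm ▸ hf
  refine ((integral_eq_iff_of_ae_le hf (integrable_Lop hf') hle).1 ?_).symm
  rw [integral_Lop hf', hstat]

variable [IsFiniteMeasure μ] [IsMarkovKernel κ]

lemma ae_imp_ae_le_of_Lop_ae_eq (hstat : κ ∘ₘ μ = μ) (hφ : Integrable φ μ)
    (hφinv : Lop κ φ =ᵐ[μ] φ) (t : ℝ) :
    ∀ᵐ x ∂μ, t < φ x → ∀ᵐ y ∂κ x, t ≤ φ y := by
  set ψ : X → ℝ := φ ⊔ fun _ => t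
  have hψ : Integrable ψ μ := hφ.sup (integrable_const t)
  have hint : ∀ᵐ x ∂μ, Integrable φ (κ x) :=
    Measure.ae_integrable_of_integrable_comp (hstat.symm ▸ hφ)
  have hψinv : Lop κ ψ =ᵐ[μ] ψ := by
    refine Lop_ae_eq_of_ae_le hstat hψ ?_
    filter_upwards [hφinv, hint] with x hx hφx
    have hψx : Integrable ψ (κ x) := hφx.sup (integrable_const t)
    refine sup_le (hx ▸ integral_mono hφx hψx le_sup_left) ?_
    simpa [Lop] using integral_mono (integrable_const t) hψx (le_sup_right (a := φ))
  filter_upwards [hφinv, hψinv, hint] with x hx hψx hφx htx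
  have hφψ : φ =ᵐ[κ x] ψ := by
    refine (integral_eq_iff_of_ae_le hφx (hφx.sup (integrable_const t))
      (ae_of_all _ fun _ => le_sup_left)).1 ?_
    change Lop κ φ x = Lop κ ψ x
    rw [hx, hψx]
    exact (sup_of_le_left htx.le).symm
  filter_upwards [hφψ] with y hy
  exact hy ▸ le_sup_right (a := φ y)

lemma ae_ae_le_of_Lop_ae_eq (hstat : κ ∘ₘ μ = μ) (hφ : Integrable φ μ)
    (hφinv : Lop κ φ =ᵐ[μ] φ) : ∀ᵐ x ∂μ, ∀ᵐ y ∂κ x, φ x ≤ φ y := by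
  filter_upwards [ae_all_iff.2 fun q : ℚ => ae_imp_ae_le_of_Lop_ae_eq hstat hφ hφinv q] with x hx
  filter_upwards [ae_all_iff.2 fun q : ℚ => eventually_imp_distrib_left.2 (hx q)] with y hy
  exact le_of_forall_rat_lt_imp_le hy

lemma ae_ae_eq_of_Lop_ae_eq (hstat : κ ∘ₘ μ = μ) (hφ : Integrable φ μ)
    (hφinv : Lop κ φ =ᵐ[μ] φ) : ∀ᵐ x ∂μ, ∀ᵐ y ∂κ x, φ y = φ x := by
  have hnegφinv : Lop κ (-φ) =ᵐ[μ] -φ := by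
    rw [Lop_neg]
    exact hφinv.neg
  filter_upwards [ae_ae_le_of_Lop_ae_eq hstat hφ hφinv,
    ae_ae_le_of_Lop_ae_eq hstat hφ.neg hnegφinv] with x hle hge
  filter_upwards [hle, hge] with y hy hy'
  exact le_antisymm (neg_le_neg_iff.1 hy') hy

lemma Lop_comp_ae_eq (hstat : κ ∘ₘ μ = μ) (hφ : Integrable φ μ)
    (hφinv : Lop κ φ =ᵐ[μ] φ) (g : ℝ → ℝ) : Lop κ (g ∘ φ) =ᵐ[μ] g ∘ φ := by
  filter_upwards [ae_ae_eq_of_Lop_ae_eq hstat hφ hφinv] with x hx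
  calc Lop κ (g ∘ φ) x = ∫ _, g (φ x) ∂κ x := integral_congr_ae (hx.mono fun y hy => by simp [hy])
    _ = g (φ x) := by simp

end TransferOperator

theorem stmt_10_general {X : Type*} [MeasurableSpace X]
    (P : X → Measure X) (hPprob : ∀ x, IsProbabilityMeasure (P x))
    (hPmeas : Measurable P)
    (μ : Measure X) [IsProbabilityMeasure μ] (hstat : μ.bind P = μ)
    (φ : X → ℝ) (hφm : Measurable φ) (hφb : ∃ C, ∀ x, |φ x| ≤ C)
    (hφinv : Lop P φ =ᵐ[μ] φ) :
    ∀ α β : ℝ,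
      (Lop P ({x | α < φ x}.indicator fun _ => (1 : ℝ))
        =ᵐ[μ] {x | α < φ x}.indicator fun _ => (1 : ℝ)) ∧
      (Lop P ({x | φ x < β}.indicator fun _ => (1 : ℝ))
        =ᵐ[μ] {x | φ x < β}.indicator fun _ => (1 : ℝ)) := by
  obtain ⟨C, hC⟩ := hφb
  let κ : Kernel X X := ⟨P, hPmeas⟩
  have : IsMarkovKernel κ := ⟨hPprob⟩
  have hφ : Integrable φ μ := .of_bound hφm.aestronglyMeasurable C (ae_of_all _ hC)
  have h := Lop_comp_ae_eq (κ := κ) hstat hφ hφinv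
  exact fun α β => ⟨h ((Set.Ioi α).indicator 1), h ((Set.Iio β).indicator 1)⟩

theorem stmt_10 {X : Type*} [MetricSpace X] [CompactSpace X]
    [MeasurableSpace X] [BorelSpace X]
    (P : X → Measure X) (hPprob : ∀ x, IsProbabilityMeasure (P x))
    (hPmeas : Measurable P)
    (μ : Measure X) [IsProbabilityMeasure μ] (hstat : μ.bind P = μ)
    (φ : X → ℝ) (hφm : Measurable φ) (hφb : ∃ C, ∀ x, |φ x| ≤ C)
    (hφinv : Lop P φ =ᵐ[μ] φ) :
    ∀ α β : ℝ,
      (Lop P ({x | α < φ x}.indicator fun _ => (1 : ℝ))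
        =ᵐ[μ] {x | α < φ x}.indicator fun _ => (1 : ℝ)) ∧
      (Lop P ({x | φ x < β}.indicator fun _ => (1 : ℝ))
        =ᵐ[μ] {x | φ x < β}.indicator fun _ => (1 : ℝ)) :=
  stmt_10_general P hPprob hPmeas μ hstat φ hφm hφb hφinv
end
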